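/- Fix an integer g ≥ 1 and suppose I_i, V_i, I'_i, V'_i ∈ ℂ (i taken cyclically modulo g+1) satisfy the discrete periodic Toda relations I'_i = I_i + V_i − V'_{i−1} and I'_i·V'_i = I_{i+1}·V_i for all i. Then the characteristic polynomial of the Lax matrix is preserved: for all x ∈ ℂ and all nonzero y ∈ ℂ, det(x·Id + L'(y)) = det(x·Id + L(y)), where L(y) and L'(y) are the Lax matrices built from the unprimed and primed variables respectively. -/

import Mathlib

/-- The Lax matrix `L(y)` of the `(g+1)`-periodic discrete Toda lattice
(indices are 0-based: position `(i,j)` here corresponds to `(i+1,j+1)` in 1-based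
notation).  Diagonal entries are `a_i = I_{i+1} + V_i`, the superdiagonal entries
are `1`, the subdiagonal entries are `b_i = I_i·V_i`, with `(−1)^g·b_1/y` added
in position `(1,g+1)` and `(−1)^g·y` added in position `(g+1,1)`. -/
noncomputable def laxMatrix (g : ℕ) (I V : Fin (g + 1) → ℂ) (y : ℂ) :
    Matrix (Fin (g + 1)) (Fin (g + 1)) ℂ := fun i j =>
  (if j = i then I (i + 1) + V i else 0)
  + (if (i : ℕ) + 1 = (j : ℕ) then 1 else 0)
  + (if (j : ℕ) + 1 = (i : ℕ) then I i * V i else 0)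
  + (if (i : ℕ) = 0 ∧ (j : ℕ) = g then (-1) ^ g * (I 0 * V 0) / y else 0)
  + (if (i : ℕ) = g ∧ (j : ℕ) = 0 then (-1) ^ g * y else 0)

/-!
The Lax matrix factors as `L(y) = U · L₋`, where `U = diag V + diag s · P` is upper and
`L₋ = 1 + diag I · P⁻¹ · diag s⁻¹` is unipotent lower bidiagonal, both wrapped around
cyclically: `P` is the cyclic shift matrix and the weights `s` are `1` except for `(-1)^g y`
in the last slot. The discrete Toda equations say exactly that the reversed product `L₋ · U`,
conjugated by the weighted shift `diag s · P`, is the next Lax matrix `L'(y)`. So `L'(y)` is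
similar to `L₋ · U`, whose characteristic polynomial is that of `U · L₋ = L(y)`.
-/

open Matrix

namespace Matrix

variable {ι R : Type*} [Fintype ι] [DecidableEq ι] [CommRing R]

theorem permMatrix_mul_diagonal (σ : Equiv.Perm ι) (f : ι → R) :
    σ.permMatrix R * diagonal f = diagonal (f ∘ σ) * σ.permMatrix R := by
  ext i j
  by_cases h : σ i = j <;> simp [h]

theorem permMatrix_mul_permMatrix_inv (σ : Equiv.Perm ι) :
    σ.permMatrix R * σ⁻¹.permMatrix R = 1 := by
  rw [← permMatrix_mul, inv_mul_cancel, permMatrix_one]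

theorem permMatrix_inv_mul_permMatrix (σ : Equiv.Perm ι) :
    σ⁻¹.permMatrix R * σ.permMatrix R = 1 := by
  rw [← permMatrix_mul, mul_inv_cancel, permMatrix_one]

theorem permMatrix_mul_diagonal_mul_permMatrix_inv (σ : Equiv.Perm ι) (f : ι → R) :
    σ.permMatrix R * diagonal f * σ⁻¹.permMatrix R = diagonal (f ∘ σ) := by
  rw [permMatrix_mul_diagonal, Matrix.mul_assoc, permMatrix_mul_permMatrix_inv, Matrix.mul_one]

theorem diagonal_mul_diagonal_eq_one {s w : ι → R} (hsw : s * w = 1) :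
    diagonal s * diagonal w = 1 := by
  rw [diagonal_mul_diagonal, ← Pi.mul_def, hsw, diagonal_one']

theorem isUnit_diagonal_mul_permMatrix {s : ι → R} (hs : IsUnit s) (σ : Equiv.Perm ι) :
    IsUnit (diagonal s * σ.permMatrix R) :=
  (isUnit_diagonal.mpr hs).mul
    ⟨⟨_, _, permMatrix_mul_permMatrix_inv σ, permMatrix_inv_mul_permMatrix σ⟩, rfl⟩

theorem charpoly_eq_of_semiconjBy {S M N : Matrix ι ι R} (hS : IsUnit S)
    (h : SemiconjBy S M N) : N.charpoly = M.charpoly := by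
  obtain ⟨u, rfl⟩ := hS
  have hN : N = u * M * (u : Matrix ι ι R)⁻¹ := by
    rw [h.eq, ← coe_units_inv, mul_assoc, Units.mul_inv, mul_one]
  rw [hN, charpoly_units_conj]

theorem det_smul_one_add_eq_charpoly_eval (M : Matrix ι ι R) (x : R) :
    (x • (1 : Matrix ι ι R) + M).det = (-1) ^ Fintype.card ι * M.charpoly.eval (-x) := by
  rw [eval_charpoly, ← det_neg, neg_sub, scalar_apply, sub_eq_add_neg, smul_one_eq_diagonal]
  simp [add_comm]

/- For `σ = finRotate n` (`i ↦ i + 1`), `periodicUpper` is upper bidiagonal and `periodicLower`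
unipotent lower bidiagonal, each with one extra corner entry, and `periodicJacobi` is the
corresponding periodic tridiagonal matrix. -/
section PeriodicJacobi

variable (σ : Equiv.Perm ι) (s w : ι → R)

def periodicJacobi (d e : ι → R) : Matrix ι ι R :=
  diagonal d + diagonal s * σ.permMatrix R + diagonal e * σ⁻¹.permMatrix R * diagonal w

def periodicUpper (V : ι → R) : Matrix ι ι R :=
  diagonal V + diagonal s * σ.permMatrix R

def periodicLower (I : ι → R) : Matrix ι ι R :=
  1 + diagonal I * σ⁻¹.permMatrix R * diagonal w

variable {s w}

theorem periodicUpper_mul_periodicLower (hsw : s * w = 1) (I V : ι → R) :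
    periodicUpper σ s V * periodicLower σ w I = periodicJacobi σ s w (V + I ∘ σ) (I * V) := by
  set P := σ.permMatrix R
  set Q := σ⁻¹.permMatrix R
  calc (diagonal V + diagonal s * P) * (1 + diagonal I * Q * diagonal w)
      = diagonal V + diagonal s * P + diagonal V * diagonal I * Q * diagonal w
        + diagonal s * (P * diagonal I * Q) * diagonal w := by noncomm_ring
    _ = diagonal V + diagonal s * P + diagonal (I * V) * Q * diagonal w
        + diagonal (I ∘ σ) * (diagonal s * diagonal w) := by
      rw [permMatrix_mul_diagonal_mul_permMatrix_inv, (commute_diagonal s _).eq,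
        (commute_diagonal V I).eq, diagonal_mul_diagonal I, ← Pi.mul_def]
      noncomm_ring
    _ = periodicJacobi σ s w (V + I ∘ σ) (I * V) := by
      rw [diagonal_mul_diagonal_eq_one hsw, Matrix.mul_one, periodicJacobi, Pi.add_def V,
        ← diagonal_add]
      abel

theorem periodicLower_mul_periodicUpper (hsw : s * w = 1) (I V : ι → R) :
    periodicLower σ w I * periodicUpper σ s V
      = periodicJacobi σ s w (V + I) (I * V ∘ ⇑σ⁻¹) := by
  set P := σ.permMatrix R
  set Q := σ⁻¹.permMatrix R
  calc (1 + diagonal I * Q * diagonal w) * (diagonal V + diagonal s * P)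
      = diagonal V + diagonal s * P + diagonal I * Q * (diagonal w * diagonal V)
        + diagonal I * Q * (diagonal w * diagonal s) * P := by noncomm_ring
    _ = diagonal V + diagonal s * P + diagonal I * (Q * diagonal V) * diagonal w
        + diagonal I * (Q * P) := by
      rw [(commute_diagonal w V).eq, (commute_diagonal w s).eq, diagonal_mul_diagonal_eq_one hsw]
      noncomm_ring
    _ = periodicJacobi σ s w (V + I) (I * V ∘ ⇑σ⁻¹) := by
      rw [permMatrix_mul_diagonal, permMatrix_inv_mul_permMatrix, Matrix.mul_one,
        ← Matrix.mul_assoc, diagonal_mul_diagonal I, ← Pi.mul_def, periodicJacobi, Pi.add_def V,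
        ← diagonal_add]
      abel

theorem semiconjBy_periodicJacobi (hsw : s * w = 1) (d e : ι → R) :
    SemiconjBy (diagonal s * σ.permMatrix R) (periodicJacobi σ s w d e)
      (periodicJacobi σ s w (d ∘ σ) (e ∘ σ)) := by
  set P := σ.permMatrix R
  set Q := σ⁻¹.permMatrix R
  calc diagonal s * P * periodicJacobi σ s w d e
      = diagonal s * (P * diagonal d) + diagonal s * P * (diagonal s * P)
        + diagonal s * (P * diagonal e * Q) * diagonal w := by
          rw [periodicJacobi]
          noncomm_ring
    _ = diagonal s * diagonal (d ∘ σ) * P + diagonal s * P * (diagonal s * P)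
        + diagonal (e ∘ σ) * (diagonal s * diagonal w) := by
      rw [permMatrix_mul_diagonal, permMatrix_mul_diagonal_mul_permMatrix_inv,
        (commute_diagonal s (e ∘ σ)).eq]
      noncomm_ring
    _ = diagonal (d ∘ σ) * diagonal s * P + diagonal s * P * (diagonal s * P)
        + diagonal (e ∘ σ) * Q * (diagonal w * diagonal s) * P := by
      rw [(commute_diagonal s (d ∘ σ)).eq, (commute_diagonal w s).eq,
        diagonal_mul_diagonal_eq_one hsw, Matrix.mul_one, Matrix.mul_one,
        Matrix.mul_assoc _ Q P, permMatrix_inv_mul_permMatrix, Matrix.mul_one]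
    _ = periodicJacobi σ s w (d ∘ σ) (e ∘ σ) * (diagonal s * P) := by
      rw [periodicJacobi]
      noncomm_ring

end PeriodicJacobi

end Matrix

def laxWeight (g : ℕ) (c : ℂ) : Fin (g + 1) → ℂ :=
  Function.update 1 (Fin.last g) ((-1) ^ g * c)

theorem laxWeight_mul_laxWeight_inv {g : ℕ} {y : ℂ} (hy : y ≠ 0) :
    laxWeight g y * laxWeight g y⁻¹ = 1 := by
  funext i
  by_cases hi : i = Fin.last g
  · have hsq : ((-1 : ℂ) ^ g) ^ 2 = 1 := by
      rw [← pow_mul, mul_comm, pow_mul, neg_one_sq, one_pow]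
    simp only [laxWeight, hi, Pi.mul_apply, Function.update_self, Pi.one_apply]
    linear_combination (y * y⁻¹) * hsq + mul_inv_cancel₀ hy
  · simp [laxWeight, hi]

theorem diagonal_laxWeight_mul_permMatrix_apply (g : ℕ) (c : ℂ) (i j : Fin (g + 1)) :
    (diagonal (laxWeight g c) * (finRotate (g + 1)).permMatrix ℂ) i j
      = (if (i : ℕ) + 1 = j then 1 else 0)
        + (if (i : ℕ) = g ∧ (j : ℕ) = 0 then (-1) ^ g * c else 0) := by
  rw [diagonal_mul]
  obtain ⟨a, rfl⟩ | rfl := Fin.eq_castSucc_or_eq_last i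
  · simp [laxWeight, finRotate_apply, a.isLt.ne, Fin.ext_iff (a := a.succ)]
  · simp [laxWeight, finRotate_apply, j.isLt.ne', eq_comm (a := (0 : Fin (g + 1)))]

theorem laxMatrix_eq_periodicJacobi (g : ℕ) (I V : Fin (g + 1) → ℂ) (y : ℂ) :
    laxMatrix g I V y = periodicJacobi (finRotate (g + 1)) (laxWeight g y) (laxWeight g y⁻¹)
      (V + I ∘ finRotate (g + 1)) (I * V) := by
  have hlower : (finRotate (g + 1))⁻¹.permMatrix ℂ * diagonal (laxWeight g y⁻¹)
      = (diagonal (laxWeight g y⁻¹) * (finRotate (g + 1)).permMatrix ℂ)ᵀ := by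
    rw [transpose_mul, transpose_permMatrix, diagonal_transpose]
  ext i j
  rw [periodicJacobi, Matrix.mul_assoc, hlower, Matrix.add_apply, Matrix.add_apply,
    diagonal_laxWeight_mul_permMatrix_apply, diagonal_mul, transpose_apply,
    diagonal_laxWeight_mul_permMatrix_apply]
  simp only [laxMatrix, diagonal_apply, Pi.add_apply, Pi.mul_apply, Function.comp_apply,
    finRotate_apply, mul_add, mul_ite, mul_one, mul_zero, @eq_comm _ j i]
  have hcorner : (if (i : ℕ) = 0 ∧ (j : ℕ) = g then (-1) ^ g * (I 0 * V 0) / y else 0)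
      = if (j : ℕ) = g ∧ (i : ℕ) = 0 then I i * V i * ((-1) ^ g * y⁻¹) else 0 := by
    by_cases h : (i : ℕ) = 0 ∧ (j : ℕ) = g
    · obtain rfl : i = 0 := Fin.ext h.1
      rw [if_pos h, if_pos h.symm]
      ring
    · rw [if_neg h, if_neg (h ∘ And.symm)]
  rw [hcorner, add_comm (V i)]
  ring

theorem dToda_preserves_charpoly (g : ℕ) (I V I' V' : Fin (g + 1) → ℂ)
    (h1 : ∀ i : Fin (g + 1), I' i = I i + V i - V' (i - 1))
    (h2 : ∀ i : Fin (g + 1), I' i * V' i = I (i + 1) * V i)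
    (x y : ℂ) (hy : y ≠ 0) :
    (x • (1 : Matrix (Fin (g + 1)) (Fin (g + 1)) ℂ) + laxMatrix g I' V' y).det =
    (x • (1 : Matrix (Fin (g + 1)) (Fin (g + 1)) ℂ) + laxMatrix g I V y).det := by
  set σ := finRotate (g + 1)
  have hsw := laxWeight_mul_laxWeight_inv (g := g) hy
  have hL : laxMatrix g I V y
      = periodicUpper σ (laxWeight g y) V * periodicLower σ (laxWeight g y⁻¹) I := by
    rw [laxMatrix_eq_periodicJacobi, periodicUpper_mul_periodicLower σ hsw]
  have hL' : laxMatrix g I' V' y = periodicJacobi σ (laxWeight g y) (laxWeight g y⁻¹)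
      ((V + I) ∘ σ) ((I * V ∘ ⇑σ⁻¹) ∘ σ) := by
    rw [laxMatrix_eq_periodicJacobi]
    congr 1 <;> funext i
    · simp [σ, finRotate_apply, h1 (i + 1), add_comm]
    · simp [σ, finRotate_apply, h2 i]
  have hsemi : SemiconjBy (diagonal (laxWeight g y) * σ.permMatrix ℂ)
      (periodicLower σ (laxWeight g y⁻¹) I * periodicUpper σ (laxWeight g y) V)
      (laxMatrix g I' V' y) := by
    rw [periodicLower_mul_periodicUpper σ hsw, hL']
    exact semiconjBy_periodicJacobi σ hsw _ _
  rw [det_smul_one_add_eq_charpoly_eval, det_smul_one_add_eq_charpoly_eval,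
    charpoly_eq_of_semiconjBy (isUnit_diagonal_mul_permMatrix (.of_mul_eq_one _ hsw) σ) hsemi,
    charpoly_mul_comm, hL]
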